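/- Let x₁,…,x_{2n} ∈ {−1,1} with n+d entries equal to +1 and n−d entries equal to −1 (d ≥ 0). Each x_i is independently flipped with probability η < 1/2 to give x'_i. Let p^n_d = Pr[Σ_i x'_i = 0]. Then p^n_d is decreasing in d for d ≥ 0. -/
import Mathlib


open Finset

/-- Binomial probability: probability of exactly k successes in m independent
trials with success probability η. -/
noncomputable def binomProb (m : ℕ) (η : ℝ) (k : ℕ) : ℝ :=
  (m.choose k : ℝ) * η ^ k * (1 - η) ^ (m - k)

/-- `pSum n d η` is the probability that the sum of 2n ±1-values, starting
with n+d values +1 and n−d values −1, becomes 0 after each value is flipped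
independently with probability η (the sum is 0 iff the number of flipped +1s
exceeds the number of flipped −1s by exactly d). -/
noncomputable def pSum (n d : ℕ) (η : ℝ) : ℝ :=
  ∑ j ∈ Finset.range (n + d + 1), ∑ k ∈ Finset.range (n - d + 1),
    if j = k + d then binomProb (n + d) η j * binomProb (n - d) η k else 0

namespace PSumAux

noncomputable def stepQ (η : ℝ) (f : ℤ → ℝ) : ℤ → ℝ := fun x => (1 - η) * f x + η * f (x - 1)
noncomputable def stepP (η : ℝ) (f : ℤ → ℝ) : ℤ → ℝ := fun x => η * f x + (1 - η) * f (x - 1)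

noncomputable def dlt : ℤ → ℝ := fun x => if x = 0 then 1 else 0

noncomputable def cf (η : ℝ) (a b : ℕ) : ℤ → ℝ := (stepQ η)^[a] ((stepP η)^[b] dlt)

lemma commute_qp (η : ℝ) : Function.Commute (stepQ η) (stepP η) := by
  intro f
  funext x
  simp only [stepQ, stepP]
  ring

lemma cf_succ_left (η : ℝ) (a b : ℕ) : cf η (a+1) b = stepQ η (cf η a b) := by
  unfold cf
  rw [Function.iterate_succ_apply']

lemma cf_succ_right (η : ℝ) (a b : ℕ) : cf η a (b+1) = stepP η (cf η a b) := by
  unfold cf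
  rw [Function.iterate_succ_apply']
  exact ((commute_qp η).iterate_left a) _

noncomputable def bi (η : ℝ) (a : ℕ) : ℤ → ℝ :=
  fun x => if 0 ≤ x ∧ x ≤ (a : ℤ) then binomProb a η x.toNat else 0

lemma cf_zero (η : ℝ) (a : ℕ) : cf η a 0 = bi η a := by
  induction a with
  | zero =>
    funext x
    simp only [cf, Function.iterate_zero, id_eq, dlt, bi]
    by_cases hx : x = 0
    · subst hx; simp [binomProb]
    · have : ¬(0 ≤ x ∧ x ≤ (0:ℤ)) := by omega
      simp [hx, this]
  | succ a ih =>
    rw [cf_succ_left, ih]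
    funext x
    simp only [stepQ, bi]
    push_cast
    rcases lt_or_ge x 0 with hx | hx
    · have h1 : ¬(0 ≤ x ∧ x ≤ (a:ℤ) + 1) := by omega
      have h2 : ¬(0 ≤ x ∧ x ≤ (a:ℤ)) := by omega
      have h3 : ¬(0 ≤ x - 1 ∧ x - 1 ≤ (a:ℤ)) := by omega
      rw [if_neg h1, if_neg h2, if_neg h3]
      ring
    · lift x to ℕ using hx with k
      cases k with
      | zero =>
        have c1 : ((0:ℤ) ≤ 0 ∧ (0:ℤ) ≤ (a:ℤ) + 1) := by omega
        have c2 : ((0:ℤ) ≤ 0 ∧ (0:ℤ) ≤ (a:ℤ)) := by omega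
        have h3 : ¬(0 ≤ (0:ℤ) - 1 ∧ (0:ℤ) - 1 ≤ (a:ℤ)) := by omega
        push_cast
        have ha : (0:ℤ) ≤ (a:ℤ) := by positivity
        have ha1 : (0:ℤ) ≤ (a:ℤ) + 1 := by omega
        simp only [le_refl, ha, ha1, and_self, true_and, if_true, if_neg h3, if_pos c1, if_pos c2,
          Int.toNat_zero, false_and, if_false, show ¬((-1:ℤ) ≥ 0) by omega]
        unfold binomProb
        simp only [Nat.choose_zero_right, Nat.sub_zero, Nat.cast_one, pow_zero]
        ring
      | succ j =>
        push_cast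
        have e1 : ((j:ℤ) + 1) - 1 = (j:ℤ) := by ring
        rw [e1]
        have t1 : ((j:ℤ) + 1).toNat = j + 1 := by omega
        have t2 : ((j:ℤ)).toNat = j := by omega
        rw [t1, t2]
        rcases le_or_gt (j+1) a with hja | hja
        · have c1 : (0 ≤ (j:ℤ) + 1 ∧ (j:ℤ) + 1 ≤ (a:ℤ) + 1) := by omega
          have c2 : (0 ≤ (j:ℤ) + 1 ∧ (j:ℤ) + 1 ≤ (a:ℤ)) := by omega
          have c3 : (0 ≤ (j:ℤ) ∧ (j:ℤ) ≤ (a:ℤ)) := by omega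
          rw [if_pos c2, if_pos c3, if_pos c1]
          unfold binomProb
          have hc : (((a + 1).choose (j + 1) : ℕ) : ℝ) = ((a.choose j : ℕ) : ℝ) + ((a.choose (j+1) : ℕ) : ℝ) := by
            rw [Nat.choose_succ_succ]; push_cast; ring
          rw [hc]
          have e2 : a + 1 - (j + 1) = (a - (j + 1)) + 1 := by omega
          have e3 : a - j = (a - (j + 1)) + 1 := by omega
          rw [e2, e3]
          ring
        · rcases Nat.eq_or_lt_of_le hja with hja2 | hja2
          · have haj : a = j := by omega
            subst haj
            have c1 : (0 ≤ (a:ℤ) + 1 ∧ (a:ℤ) + 1 ≤ (a:ℤ) + 1) := by omega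
            have c2 : ¬(0 ≤ (a:ℤ) + 1 ∧ (a:ℤ) + 1 ≤ (a:ℤ)) := by omega
            have c3 : (0 ≤ (a:ℤ) ∧ (a:ℤ) ≤ (a:ℤ)) := by omega
            rw [if_neg c2, if_pos c3, if_pos c1]
            unfold binomProb
            simp only [Nat.choose_self, Nat.sub_self, Nat.cast_one, pow_zero]
            ring
          · have c1 : ¬(0 ≤ (j:ℤ) + 1 ∧ (j:ℤ) + 1 ≤ (a:ℤ) + 1) := by omega
            have c2 : ¬(0 ≤ (j:ℤ) + 1 ∧ (j:ℤ) + 1 ≤ (a:ℤ)) := by omega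
            have c3 : ¬(0 ≤ (j:ℤ) ∧ (j:ℤ) ≤ (a:ℤ)) := by omega
            rw [if_neg c2, if_neg c3, if_neg c1]
            ring

def IsGood (f : ℤ → ℝ) (μ : ℤ) : Prop := ∀ s : ℤ, 0 ≤ s → 0 ≤ f (μ - s) - f (μ + 1 + s)

lemma step2_apply (η : ℝ) (f : ℤ → ℝ) (x : ℤ) :
    stepQ η (stepP η f) x
      = η * (1 - η) * f x + ((1 - η)^2 + η^2) * f (x - 1) + η * (1 - η) * f (x - 2) := by
  simp only [stepQ, stepP]
  have e : x - 1 - 1 = x - 2 := by ring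
  rw [e]
  ring

lemma isGood_step (η : ℝ) (hη0 : 0 ≤ η) (hη1 : η ≤ 1/2) {f : ℤ → ℝ} {μ : ℤ}
    (hf : IsGood f μ) : IsGood (stepQ η (stepP η f)) (μ + 1) := by
  intro s hs
  have hq0 : (0:ℝ) ≤ 1 - η := by linarith
  have hpq : (0:ℝ) ≤ η * (1 - η) := mul_nonneg hη0 hq0
  have hv : (0:ℝ) ≤ (1 - η)^2 + η^2 := by positivity
  rw [step2_apply, step2_apply]
  rcases eq_or_lt_of_le hs with h0 | h1
  · -- s = 0
    have hs0 : s = 0 := h0.symm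
    subst hs0
    have e1 : μ + 1 - 0 = μ + 1 := by ring
    have e2 : μ + 1 - 0 - 1 = μ - 0 := by ring
    have e3 : μ + 1 - 0 - 2 = μ - 1 := by ring
    have e4 : μ + 1 + 1 + 0 - 1 = μ + 1 + 0 := by ring
    have e5 : μ + 1 + 1 + 0 - 2 = μ - 0 := by ring
    have e6 : μ + 1 + 1 + 0 = μ + 1 + 1 := by ring
    rw [e3, e2, e4, e5, e6, e1, show μ + 1 + 0 = μ + 1 from by ring,
      show μ - 0 = μ from by ring]
    have h0' : 0 ≤ f μ - f (μ + 1) := by simpa using hf 0 le_rfl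
    have h1' : 0 ≤ f (μ - 1) - f (μ + 1 + 1) := hf 1 (by norm_num)
    have hc : (0:ℝ) ≤ (1 - η)^2 + η^2 - η * (1 - η) := by nlinarith [sq_nonneg (1 - 2*η)]
    nlinarith [mul_nonneg hc h0', mul_nonneg hpq h1']
  · -- s ≥ 1
    have e1 : μ + 1 - s = μ - (s - 1) := by ring
    have e2 : μ + 1 - s - 1 = μ - s := by ring
    have e3 : μ + 1 - s - 2 = μ - (s + 1) := by ring
    have e4 : μ + 1 + 1 + s - 1 = μ + 1 + s := by ring
    have e5 : μ + 1 + 1 + s - 2 = μ + 1 + (s - 1) := by ring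
    have e6 : μ + 1 + 1 + s = μ + 1 + (s + 1) := by ring
    rw [e3, e2, e4, e5, e6, e1]
    have hA := hf (s - 1) (by omega)
    have hB := hf s hs
    have hC := hf (s + 1) (by omega)
    nlinarith [mul_nonneg hpq hA, mul_nonneg hv hB, mul_nonneg hpq hC]

lemma isGood_bi (η : ℝ) (hη0 : 0 ≤ η) (hη1 : η ≤ 1/2) (m₀ : ℕ) :
    IsGood (bi η (2*m₀+1)) (m₀ : ℤ) := by
  intro s hs
  by_cases hsm : s ≤ (m₀ : ℤ)
  · lift s to ℕ using hs with t
    have ht : t ≤ m₀ := by exact_mod_cast hsm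
    have e1 : (m₀ : ℤ) - t = ((m₀ - t : ℕ) : ℤ) := by omega
    have e2 : (m₀ : ℤ) + 1 + t = ((m₀ + 1 + t : ℕ) : ℤ) := by push_cast; ring
    rw [e1, e2]
    simp only [bi]
    have c1 : (0 ≤ ((m₀ - t : ℕ) : ℤ) ∧ ((m₀ - t : ℕ) : ℤ) ≤ ((2*m₀+1 : ℕ) : ℤ)) := by
      constructor <;> omega
    have c2 : (0 ≤ ((m₀ + 1 + t : ℕ) : ℤ) ∧ ((m₀ + 1 + t : ℕ) : ℤ) ≤ ((2*m₀+1 : ℕ) : ℤ)) := by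
      constructor <;> omega
    rw [if_pos c1, if_pos c2, Int.toNat_natCast, Int.toNat_natCast]
    unfold binomProb
    have hcs : (2*m₀+1).choose (m₀ - t) = (2*m₀+1).choose (m₀ + 1 + t) := by
      have h1 : m₀ + 1 + t ≤ 2*m₀ + 1 := by omega
      have h2 : (2*m₀+1) - (m₀ + 1 + t) = m₀ - t := by omega
      rw [← h2, Nat.choose_symm h1]
    have eA : (2*m₀+1) - (m₀ - t) = m₀ + 1 + t := by omega
    have eB : (2*m₀+1) - (m₀ + 1 + t) = m₀ - t := by omega
    rw [hcs, eA, eB]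
    have eC : m₀ + 1 + t = (m₀ - t) + (2*t + 1) := by omega
    have hq0 : (0:ℝ) ≤ 1 - η := by linarith
    have e5 : ∀ y : ℝ, y ^ (m₀ + 1 + t) = y ^ (m₀ - t) * y ^ (2*t + 1) := by
      intro y; rw [eC, pow_add]
    rw [e5 η, e5 (1 - η)]
    have hpow : η ^ (2*t+1) ≤ (1 - η) ^ (2*t+1) := by
      apply pow_le_pow_left₀ hη0 (by linarith)
    have h1 : (0:ℝ) ≤ ((2*m₀+1).choose (m₀+1+t) : ℝ) := by positivity
    have h2 : (0:ℝ) ≤ η ^ (m₀ - t) * (1 - η) ^ (m₀ - t) :=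
      mul_nonneg (pow_nonneg hη0 _) (pow_nonneg hq0 _)
    nlinarith [mul_nonneg (mul_nonneg h1 h2) (sub_nonneg.mpr hpow)]
  · have c1 : ¬(0 ≤ (m₀ : ℤ) - s ∧ (m₀ : ℤ) - s ≤ ((2*m₀+1 : ℕ) : ℤ)) := by
      push_cast; omega
    have c2 : ¬(0 ≤ (m₀ : ℤ) + 1 + s ∧ (m₀ : ℤ) + 1 + s ≤ ((2*m₀+1 : ℕ) : ℤ)) := by
      push_cast; omega
    simp only [bi]
    rw [if_neg c1, if_neg c2]
    norm_num

lemma isGood_cf (η : ℝ) (hη0 : 0 ≤ η) (hη1 : η ≤ 1/2) (m₀ b : ℕ) :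
    IsGood (cf η (2*m₀+1+b) b) ((m₀ : ℤ) + b) := by
  induction b with
  | zero =>
    simpa [cf_zero] using isGood_bi η hη0 hη1 m₀
  | succ b ih =>
    have hrw : cf η (2*m₀+1+(b+1)) (b+1) = stepQ η (stepP η (cf η (2*m₀+1+b) b)) := by
      rw [show 2*m₀+1+(b+1) = (2*m₀+1+b)+1 from by ring, cf_succ_left, cf_succ_right]
    rw [hrw]
    have := isGood_step η hη0 hη1 ih
    have ec : ((m₀ : ℤ) + b) + 1 = (m₀ : ℤ) + (b + 1 : ℕ) := by push_cast; ring
    rwa [ec] at this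
lemma binomProb_succ_succ (η : ℝ) (b k : ℕ) :
    binomProb (b+1) η (k+1) = (1-η) * binomProb b η (k+1) + η * binomProb b η k := by
  unfold binomProb
  rcases lt_trichotomy k b with h | h | h
  · have hc : (((b+1).choose (k+1) : ℕ) : ℝ) = ((b.choose k : ℕ) : ℝ) + ((b.choose (k+1) : ℕ) : ℝ) := by
      rw [Nat.choose_succ_succ]; push_cast; ring
    rw [hc]
    have e1 : b + 1 - (k+1) = (b - (k+1)) + 1 := by omega
    have e2 : b - k = (b - (k+1)) + 1 := by omega
    rw [e1, e2]
    ring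
  · subst h
    simp [Nat.choose_self, Nat.choose_succ_self, Nat.sub_self]
    ring
  · have h1 : (b+1).choose (k+1) = 0 := Nat.choose_eq_zero_of_lt (by omega)
    have h2 : b.choose (k+1) = 0 := Nat.choose_eq_zero_of_lt (by omega)
    have h3 : b.choose k = 0 := Nat.choose_eq_zero_of_lt (by omega)
    simp [h1, h2, h3]

lemma binomProb_zero (η : ℝ) (b : ℕ) : binomProb (b+1) η 0 = (1-η) * binomProb b η 0 := by
  unfold binomProb
  simp [pow_succ]
  ring

lemma binomProb_past (η : ℝ) (b : ℕ) : binomProb b η (b+1) = 0 := by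
  unfold binomProb
  simp [Nat.choose_succ_self]

lemma cf_eq_sum (η : ℝ) (a : ℕ) :
    ∀ b m : ℕ, cf η a b ((m : ℤ) + b) =
      ∑ k ∈ Finset.range (b+1), binomProb a η (m + k) * binomProb b η k := by
  intro b
  induction b with
  | zero =>
    intro m
    rw [cf_zero]
    rw [show (0:ℕ) + 1 = 1 from rfl, Finset.sum_range_one]
    have hb0 : binomProb 0 η 0 = 1 := by unfold binomProb; simp
    rw [hb0, Nat.add_zero, mul_one]
    rw [show ((0:ℕ):ℤ) = (0:ℤ) from rfl, add_zero]
    simp only [bi]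
    by_cases hma : m ≤ a
    · have c : (0 ≤ (m:ℤ) ∧ (m:ℤ) ≤ (a:ℤ)) := by constructor <;> omega
      rw [if_pos c, Int.toNat_natCast]
    · have c : ¬(0 ≤ (m:ℤ) ∧ (m:ℤ) ≤ (a:ℤ)) := by
        push_neg; intro _; omega
      rw [if_neg c]
      unfold binomProb
      rw [Nat.choose_eq_zero_of_lt (by omega)]
      simp
  | succ b ih =>
    intro m
    rw [cf_succ_right]
    simp only [stepP]
    rw [show (m : ℤ) + ((b+1 : ℕ) : ℤ) = ((m+1 : ℕ) : ℤ) + (b : ℤ) from by push_cast; ring]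
    rw [show ((m+1 : ℕ) : ℤ) + (b : ℤ) - 1 = ((m : ℕ) : ℤ) + (b : ℤ) from by push_cast; ring]
    rw [ih (m+1), ih m]
    have h1 : ∑ k ∈ Finset.range (b+1+1), binomProb a η (m + k) * binomProb (b+1) η k
        = ∑ i ∈ Finset.range (b+1), binomProb a η (m + (i+1)) * binomProb (b+1) η (i+1)
          + binomProb a η (m + 0) * binomProb (b+1) η 0 :=
      Finset.sum_range_succ' _ (b+1)
    have h2 : ∑ i ∈ Finset.range (b+1), binomProb a η (m + (i+1)) * binomProb (b+1) η (i+1)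
        = (1-η) * (∑ i ∈ Finset.range (b+1), binomProb a η (m + (i+1)) * binomProb b η (i+1))
          + η * (∑ i ∈ Finset.range (b+1), binomProb a η (m + 1 + i) * binomProb b η i) := by
      rw [Finset.mul_sum, Finset.mul_sum, ← Finset.sum_add_distrib]
      apply Finset.sum_congr rfl
      intro i _
      rw [binomProb_succ_succ η b i, show m + 1 + i = m + (i+1) from by omega]
      ring
    have h3 : ∑ i ∈ Finset.range (b+1), binomProb a η (m + (i+1)) * binomProb b η (i+1)
          + binomProb a η (m + 0) * binomProb b η 0
        = ∑ k ∈ Finset.range (b+1), binomProb a η (m + k) * binomProb b η k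
          + binomProb a η (m + (b+1)) * binomProb b η (b+1) := by
      rw [← Finset.sum_range_succ' (fun k => binomProb a η (m + k) * binomProb b η k) (b+1),
        Finset.sum_range_succ]
    have h4 : binomProb b η (b+1) = 0 := binomProb_past η b
    have h5 : binomProb (b+1) η 0 = (1-η) * binomProb b η 0 := binomProb_zero η b
    rw [h1, h2, h5]
    rw [h4, mul_zero, add_zero] at h3
    have h6 : ∑ i ∈ Finset.range (b+1), binomProb a η (m + (i+1)) * binomProb b η (i+1)
        = ∑ k ∈ Finset.range (b+1), binomProb a η (m + k) * binomProb b η k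
          - binomProb a η m * binomProb b η 0 := by
      linarith [h3]
    simp only [Nat.add_zero]
    rw [h6]
    ring


lemma pSum_eq_sum (η : ℝ) (n d : ℕ) :
    pSum n d η = ∑ k ∈ Finset.range (n-d+1), binomProb (n+d) η (k+d) * binomProb (n-d) η k := by
  unfold pSum
  rw [Finset.sum_comm]
  apply Finset.sum_congr rfl
  intro k hk
  rw [Finset.sum_ite_eq' (Finset.range (n+d+1)) (k+d)
    (fun j => binomProb (n+d) η j * binomProb (n-d) η k)]
  have hmem : k + d ∈ Finset.range (n+d+1) := by
    simp only [Finset.mem_range] at hk ⊢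
    omega
  rw [if_pos hmem]

lemma pSum_eq_cf (η : ℝ) (n d : ℕ) (hd : d ≤ n) :
    pSum n d η = cf η (n+d) (n-d) ((n : ℕ) : ℤ) := by
  rw [pSum_eq_sum]
  have h := cf_eq_sum η (n+d) (n-d) d
  have e : ((d : ℕ) : ℤ) + ((n-d : ℕ) : ℤ) = ((n : ℕ) : ℤ) := by omega
  rw [e] at h
  rw [h]
  apply Finset.sum_congr rfl
  intro k _
  rw [show d + k = k + d from by omega]

lemma pSum_step (η : ℝ) (hη0 : 0 ≤ η) (hη1 : η ≤ 1/2) (n d : ℕ) (hd : d + 1 ≤ n) :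
    pSum n (d+1) η ≤ pSum n d η := by
  rw [pSum_eq_cf η n d (by omega), pSum_eq_cf η n (d+1) hd]
  rw [show n - d = (n - (d+1)) + 1 from by omega, cf_succ_right]
  rw [show n + (d+1) = (n + d) + 1 from by omega, cf_succ_left]
  set f := cf η (n+d) (n-(d+1)) with hf
  simp only [stepQ, stepP]
  have hg : IsGood (cf η (2*d+1+(n-(d+1))) (n-(d+1))) ((d : ℤ) + ((n-(d+1) : ℕ) : ℤ)) :=
    isGood_cf η hη0 hη1 d (n-(d+1))
  rw [show 2*d+1+(n-(d+1)) = n + d from by omega] at hg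
  have h0 := hg 0 le_rfl
  have e1 : (d : ℤ) + ((n-(d+1) : ℕ) : ℤ) - 0 = ((n:ℕ) : ℤ) - 1 := by omega
  have e2 : (d : ℤ) + ((n-(d+1) : ℕ) : ℤ) + 1 + 0 = ((n:ℕ) : ℤ) := by omega
  rw [e1, e2] at h0
  -- h0 : 0 ≤ f (n - 1) - f n
  nlinarith [mul_nonneg (show (0:ℝ) ≤ 1 - 2*η from by linarith) h0]

end PSumAux


/-- p^n_d is decreasing in d (for 0 ≤ d ≤ n and flip rate
η < 1/2). -/
theorem pSum_antitone (n d₁ d₂ : ℕ) (h₁₂ : d₁ ≤ d₂) (h₂ : d₂ ≤ n)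
    (η : ℝ) (hη0 : 0 ≤ η) (hη : η < 1 / 2) :
    pSum n d₂ η ≤ pSum n d₁ η := by
  have hη1 : η ≤ 1/2 := le_of_lt hη
  have aux : ∀ e : ℕ, d₁ + e ≤ n → pSum n (d₁ + e) η ≤ pSum n d₁ η := by
    intro e
    induction e with
    | zero => intro _; simp
    | succ e ih =>
      intro he
      have h1 : pSum n (d₁ + e + 1) η ≤ pSum n (d₁ + e) η :=
        PSumAux.pSum_step η hη0 hη1 n (d₁ + e) (by omega)
      have h2 : pSum n (d₁ + e) η ≤ pSum n d₁ η := ih (by omega)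
      calc pSum n (d₁ + (e+1)) η = pSum n (d₁ + e + 1) η := by rw [show d₁ + (e+1) = d₁ + e + 1 from by omega]
    _ ≤ pSum n (d₁ + e) η := h1
    _ ≤ pSum n d₁ η := h2
  have := aux (d₂ - d₁) (by omega)
  rwa [show d₁ + (d₂ - d₁) = d₂ from by omega] at this
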